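/- Finite model property for MB: if an MB-formula A is not valid, then there exists an MB-realization (S,R,P,V) with S a finite set such that A is not valid in it (i.e., s ∉ V(A) for some s ∈ S). -/
import Mathlib


set_option maxHeartbeats 1000000

namespace MBQL

/-- The fixed finite set `J ⊆ [0,1]` of inner-product values, with `0, 1 ∈ J`. -/
structure MBParams where
  J : Set ℝ
  finite : J.Finite
  subI : J ⊆ Set.Icc (0:ℝ) 1
  zero_mem : (0:ℝ) ∈ J
  one_mem : (1:ℝ) ∈ J

/-- Formulas of **MB**: `A ::= p | ⊤ | ⊥ | ¬A | A∧A | □^c_α A | □^o_α A` (α ∈ J). -/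
inductive MBForm (Pm : MBParams) : Type
  | var : ℕ → MBForm Pm
  | top : MBForm Pm
  | bot : MBForm Pm
  | neg : MBForm Pm → MBForm Pm
  | conj : MBForm Pm → MBForm Pm → MBForm Pm
  | boxc : Pm.J → MBForm Pm → MBForm Pm
  | boxo : Pm.J → MBForm Pm → MBForm Pm

noncomputable instance {Pm : MBParams} : DecidableEq (MBForm Pm) := Classical.decEq _

/-- Valuation of a formula, given worlds `S`, a relation `R : S → S → ℝ` and a
valuation `V` of the propositional variables. -/
def MBForm.valR {Pm : MBParams} {S : Type} (R : S → S → ℝ) (V : ℕ → Set S) :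
    MBForm Pm → Set S
  | .var n => V n
  | .top => Set.univ
  | .bot => ∅
  | .neg A => (A.valR R V)ᶜ
  | .conj A B => A.valR R V ∩ B.valR R V
  | .boxc α A => {s | ∀ t, (α : ℝ) ≤ R s t → t ∈ A.valR R V}
  | .boxo α A => {s | ∀ t, (α : ℝ) < R s t → t ∈ A.valR R V}

/-- An EQL-frame. -/
structure EQLFrame where
  S : Type
  nonempty : Nonempty S
  R : S → S → ℝ
  mem_Icc : ∀ s t, R s t ∈ Set.Icc (0:ℝ) 1
  eq_one_iff : ∀ s t, (R s t = 1 ↔ s = t)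
  symm : ∀ s t, R s t = R t s

/-- An MB-realization. -/
structure MBRealization (Pm : MBParams) where
  F : EQLFrame
  P : Set (Set F.S)
  univ_mem : Set.univ ∈ P
  empty_mem : ∅ ∈ P
  inter_mem : ∀ X ∈ P, ∀ Y ∈ P, X ∩ Y ∈ P
  compl_mem : ∀ X ∈ P, Xᶜ ∈ P
  boxc_mem : ∀ α ∈ Pm.J, ∀ X ∈ P, {s | ∀ t, α ≤ F.R s t → t ∈ X} ∈ P
  boxo_mem : ∀ α ∈ Pm.J, ∀ X ∈ P, {s | ∀ t, α < F.R s t → t ∈ X} ∈ P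
  V : ℕ → Set F.S
  V_mem : ∀ n, V n ∈ P

/-- The extended valuation of a formula in an MB-realization. -/
def MBRealization.val {Pm : MBParams} (M : MBRealization Pm) (A : MBForm Pm) :
    Set M.F.S := A.valR M.F.R M.V

/-- Validity of an MB-formula. -/
def MBValid {Pm : MBParams} (A : MBForm Pm) : Prop :=
  ∀ (M : MBRealization Pm) (s : M.F.S), s ∈ M.val A

inductive Side : Type
  | c : Side
  | o : Side
deriving DecidableEq

/-- A label `(α, d)` on a modal bracket, with `α ∈ J − {1}`. -/
structure MBLab (Pm : MBParams) where
  α : ℝ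
  memJ : α ∈ Pm.J
  ne_one : α ≠ 1
  d : Side

mutual
/-- Nested-sequents: a finite tree whose nodes are sequents (pairs of finite
sets of formulas) and whose edges carry labels. -/
inductive NSeq (Pm : MBParams) : Type
  | node : Finset (MBForm Pm) → Finset (MBForm Pm) → NSeqs Pm → NSeq Pm
/-- A finite list of labelled child nested-sequents. -/
inductive NSeqs (Pm : MBParams) : Type
  | nil : NSeqs Pm
  | cons : MBLab Pm → NSeq Pm → NSeqs Pm → NSeqs Pm
end

/-- The `i`-th labelled child. -/
def NSeqs.get {Pm : MBParams} : NSeqs Pm → ℕ → Option (MBLab Pm × NSeq Pm)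
  | .nil, _ => none
  | .cons l t _, 0 => some (l, t)
  | .cons _ _ ts, n+1 => ts.get n

/-- `SubAt t p u`: the subtree of `t` at the path (node address) `p` is `u`. -/
inductive SubAt {Pm : MBParams} : NSeq Pm → List ℕ → NSeq Pm → Prop
  | here (t : NSeq Pm) : SubAt t [] t
  | there {Γ Δ : Finset (MBForm Pm)} {ts : NSeqs Pm} {i : ℕ} {l : MBLab Pm}
      {u v : NSeq Pm} {p : List ℕ} :
      NSeqs.get ts i = some (l, u) → SubAt u p v → SubAt (.node Γ Δ ts) (i :: p) v

/-- `p` is (the address of) a node of `t`. -/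
def IsNode {Pm : MBParams} (t : NSeq Pm) (p : List ℕ) : Prop := ∃ u, SubAt t p u

mutual
/-- Replace the sequent at the node with address `p` by `Γ' ⇒ Δ'`
(children are kept). -/
def NSeq.setSeq {Pm : MBParams} :
    NSeq Pm → List ℕ → Finset (MBForm Pm) → Finset (MBForm Pm) → NSeq Pm
  | .node _ _ ts, [], Γ', Δ' => .node Γ' Δ' ts
  | .node Γ Δ ts, i :: p, Γ', Δ' => .node Γ Δ (NSeqs.setSeqs ts i p Γ' Δ')
def NSeqs.setSeqs {Pm : MBParams} :
    NSeqs Pm → ℕ → List ℕ → Finset (MBForm Pm) → Finset (MBForm Pm) → NSeqs Pm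
  | .nil, _, _, _, _ => .nil
  | .cons l t ts, 0, p, Γ', Δ' => .cons l (t.setSeq p Γ' Δ') ts
  | .cons l t ts, n+1, p, Γ', Δ' => .cons l t (NSeqs.setSeqs ts n p Γ' Δ')
end

/-- Append a labelled child at the end of a children list. -/
def NSeqs.snoc {Pm : MBParams} : NSeqs Pm → MBLab Pm → NSeq Pm → NSeqs Pm
  | .nil, l, u => .cons l u .nil
  | .cons l' t ts, l, u => .cons l' t (ts.snoc l u)

mutual
/-- Add a new child `[u]_l` at the node with address `p`. -/
def NSeq.addChild {Pm : MBParams} : NSeq Pm → List ℕ → MBLab Pm → NSeq Pm → NSeq Pm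
  | .node Γ Δ ts, [], l, u => .node Γ Δ (ts.snoc l u)
  | .node Γ Δ ts, i :: p, l, u => .node Γ Δ (NSeqs.addChilds ts i p l u)
def NSeqs.addChilds {Pm : MBParams} : NSeqs Pm → ℕ → List ℕ → MBLab Pm → NSeq Pm → NSeqs Pm
  | .nil, _, _, _, _ => .nil
  | .cons l' t ts, 0, p, l, u => .cons l' (t.addChild p l u) ts
  | .cons l' t ts, n+1, p, l, u => .cons l' t (NSeqs.addChilds ts n p l u)
end


/-- Logical connectives defined by abbreviation: `A ∨ B`. -/
def MBForm.or {Pm : MBParams} (A B : MBForm Pm) : MBForm Pm := .neg (.conj (.neg A) (.neg B))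

/-- `A → B := ¬A ∨ B`. -/
def MBForm.imp {Pm : MBParams} (A B : MBForm Pm) : MBForm Pm := (MBForm.neg A).or B

/-- Conjunction of a list of formulas. -/
def conjList {Pm : MBParams} : List (MBForm Pm) → MBForm Pm
  | [] => .top
  | [A] => A
  | A :: B :: rest => .conj A (conjList (B :: rest))

/-- Disjunction of a list of formulas. -/
def disjList {Pm : MBParams} : List (MBForm Pm) → MBForm Pm
  | [] => .bot
  | [A] => A
  | A :: B :: rest => (A).or (disjList (B :: rest))

/-- `⋀Γ → ⋁Δ`. -/
noncomputable def seqForm {Pm : MBParams} (Γ Δ : Finset (MBForm Pm)) : MBForm Pm :=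
  (conjList Γ.toList).imp (disjList Δ.toList)

/-- The box corresponding to a bracket label. -/
def MBLab.box {Pm : MBParams} (l : MBLab Pm) (A : MBForm Pm) : MBForm Pm :=
  match l.d with
  | .c => .boxc ⟨l.α, l.memJ⟩ A
  | .o => .boxo ⟨l.α, l.memJ⟩ A

mutual
/-- The interpretation `τ` of a nested-sequent as a formula. -/
noncomputable def NSeq.tau {Pm : MBParams} : NSeq Pm → MBForm Pm
  | .node Γ Δ ts => NSeqs.tauAux (seqForm Γ Δ) ts
noncomputable def NSeqs.tauAux {Pm : MBParams} : MBForm Pm → NSeqs Pm → MBForm Pm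
  | A, .nil => A
  | A, .cons l t ts => NSeqs.tauAux (A.or (l.box t.tau)) ts
end

/-- `E` is an embedding of the nested-sequent `t` into the realization `M`
(`E` is given on node addresses). -/
def IsEmb {Pm : MBParams} (M : MBRealization Pm) (t : NSeq Pm)
    (E : List ℕ → M.F.S) : Prop :=
  ∀ p Γ Δ ts i l u, SubAt t p (.node Γ Δ ts) → NSeqs.get ts i = some (l, u) →
    (l.d = Side.c → l.α ≤ M.F.R (E p) (E (p ++ [i]))) ∧
    (l.d = Side.o → l.α < M.F.R (E p) (E (p ++ [i])))

/-- The nested-sequent `t` is false in `M` under `E`. -/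
def FalseUnder {Pm : MBParams} (M : MBRealization Pm) (t : NSeq Pm)
    (E : List ℕ → M.F.S) : Prop :=
  ∀ p Γ Δ ts, SubAt t p (.node Γ Δ ts) →
    (∀ A ∈ Γ, E p ∈ M.val A) ∧ (∀ A ∈ Δ, E p ∉ M.val A)

/-- Validity of a nested-sequent: it is not false under any embedding into
any MB-realization. -/
def NSValid {Pm : MBParams} (t : NSeq Pm) : Prop :=
  ∀ (M : MBRealization Pm) (E : List ℕ → M.F.S), IsEmb M t E → ¬ FalseUnder M t E


/-- `□^d_α A`. -/
def mkBox {Pm : MBParams} (d : Side) (α : Pm.J) (A : MBForm Pm) : MBForm Pm :=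
  match d with
  | .c => .boxc α A
  | .o => .boxo α A

/-- The total order `⪯` on `I × {c,o}`: `pleq α d β d'` means `(α,d) ⪯ (β,d')`. -/
def pleq : ℝ → Side → ℝ → Side → Prop
  | α, .o, β, .c => α < β
  | α, _, β, _ => α ≤ β

/-- Provability in the nested-sequent calculus **NSMB**.  The boolean
parameter records whether the rule (cut) may be used. -/
inductive Provable {Pm : MBParams} : Bool → NSeq Pm → Prop
  /-- axiom `‖A, Γ ⇒ Δ, A, T‖` -/
  | axId {cut : Bool} {t : NSeq Pm} {p Γ Δ ts A} :
      SubAt t p (.node Γ Δ ts) → A ∈ Γ → A ∈ Δ → Provable cut t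
  /-- axiom `‖Γ ⇒ Δ, ⊤, T‖` -/
  | axTop {cut : Bool} {t : NSeq Pm} {p Γ Δ ts} :
      SubAt t p (.node Γ Δ ts) → MBForm.top ∈ Δ → Provable cut t
  /-- axiom `‖⊥, Γ ⇒ Δ, T‖` -/
  | axBot {cut : Bool} {t : NSeq Pm} {p Γ Δ ts} :
      SubAt t p (.node Γ Δ ts) → MBForm.bot ∈ Γ → Provable cut t
  /-- axiom `‖Γ ⇒ Δ, □^o_1 A, T‖` -/
  | axBoxO1 {cut : Bool} {t : NSeq Pm} {p Γ Δ ts A} :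
      SubAt t p (.node Γ Δ ts) → MBForm.boxo ⟨1, Pm.one_mem⟩ A ∈ Δ → Provable cut t
  /-- rule (cut) -/
  | cutR {t : NSeq Pm} {p Γ Δ ts A} :
      SubAt t p (.node Γ Δ ts) →
      Provable true (t.setSeq p Γ (insert A Δ)) →
      Provable true (t.setSeq p (insert A Γ) Δ) →
      Provable true t
  /-- rule (wL) -/
  | wL {cut : Bool} {t : NSeq Pm} {p Γ Δ ts A} :
      SubAt t p (.node Γ Δ ts) → Provable cut t →
      Provable cut (t.setSeq p (insert A Γ) Δ)
  /-- rule (wR) -/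
  | wR {cut : Bool} {t : NSeq Pm} {p Γ Δ ts A} :
      SubAt t p (.node Γ Δ ts) → Provable cut t →
      Provable cut (t.setSeq p Γ (insert A Δ))
  /-- rule (¬L) -/
  | negL {cut : Bool} {t : NSeq Pm} {p Γ Δ ts A} :
      SubAt t p (.node Γ Δ ts) →
      Provable cut (t.setSeq p Γ (insert A Δ)) →
      Provable cut (t.setSeq p (insert (MBForm.neg A) Γ) Δ)
  /-- rule (¬R) -/
  | negR {cut : Bool} {t : NSeq Pm} {p Γ Δ ts A} :
      SubAt t p (.node Γ Δ ts) →
      Provable cut (t.setSeq p (insert A Γ) Δ) →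
      Provable cut (t.setSeq p Γ (insert (MBForm.neg A) Δ))
  /-- rule (∧L) -/
  | andL {cut : Bool} {t : NSeq Pm} {p Γ Δ ts A B} :
      SubAt t p (.node Γ Δ ts) →
      Provable cut (t.setSeq p (insert A (insert B Γ)) Δ) →
      Provable cut (t.setSeq p (insert (MBForm.conj A B) Γ) Δ)
  /-- rule (∧R) -/
  | andR {cut : Bool} {t : NSeq Pm} {p Γ Δ ts A B} :
      SubAt t p (.node Γ Δ ts) →
      Provable cut (t.setSeq p Γ (insert A Δ)) →
      Provable cut (t.setSeq p Γ (insert B Δ)) →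
      Provable cut (t.setSeq p Γ (insert (MBForm.conj A B) Δ))
  /-- rule (□L), with side condition `(α,d) ⪯ (β,d')` -/
  | boxL {cut : Bool} {t : NSeq Pm} {p Γ Δ ts i l u Γ' Δ' ts' A} {α : Pm.J} {d : Side} :
      SubAt t p (.node Γ Δ ts) → NSeqs.get ts i = some (l, u) →
      SubAt t (p ++ [i]) (.node Γ' Δ' ts') →
      pleq (α : ℝ) d l.α l.d →
      Provable cut (t.setSeq (p ++ [i]) (insert A Γ') Δ') →
      Provable cut (t.setSeq p (insert (mkBox d α A) Γ) Δ)
  /-- rule (□L sym), with side condition `(α,d) ⪯ (β,d')` -/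
  | boxLsym {cut : Bool} {t : NSeq Pm} {p Γ Δ ts i l u Γ' Δ' ts' A} {α : Pm.J} {d : Side} :
      SubAt t p (.node Γ Δ ts) → NSeqs.get ts i = some (l, u) →
      SubAt t (p ++ [i]) (.node Γ' Δ' ts') →
      pleq (α : ℝ) d l.α l.d →
      Provable cut (t.setSeq p (insert A Γ) Δ) →
      Provable cut (t.setSeq (p ++ [i]) (insert (mkBox d α A) Γ') Δ')
  /-- rule (□L self), with side condition `(α,d) ≠ (1,o)` -/
  | boxLself {cut : Bool} {t : NSeq Pm} {p Γ Δ ts A} {α : Pm.J} {d : Side} :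
      SubAt t p (.node Γ Δ ts) → ¬((α : ℝ) = 1 ∧ d = Side.o) →
      Provable cut (t.setSeq p (insert A Γ) Δ) →
      Provable cut (t.setSeq p (insert (mkBox d α A) Γ) Δ)
  /-- rule (□^c_0): erase `A` from the left of one node and add `□^c_0 A`
  to the left of another arbitrary node -/
  | boxC0 {cut : Bool} {t : NSeq Pm} {p Γ Δ ts q Γ'' Δ'' ts'' A} :
      SubAt t p (.node Γ Δ ts) → SubAt t q (.node Γ'' Δ'' ts'') →
      Provable cut (t.setSeq p (insert A Γ) Δ) →
      Provable cut (t.setSeq q (insert (MBForm.boxc ⟨0, Pm.zero_mem⟩ A) Γ'') Δ'')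
  /-- rule (□R) -/
  | boxR {cut : Bool} {t : NSeq Pm} {p Γ Δ ts A} {l : MBLab Pm} :
      SubAt t p (.node Γ Δ ts) →
      Provable cut (t.addChild p l (.node ∅ {A} .nil)) →
      Provable cut (t.setSeq p Γ (insert (l.box A) Δ))
  /-- rule (□R self) -/
  | boxRself {cut : Bool} {t : NSeq Pm} {p Γ Δ ts A} :
      SubAt t p (.node Γ Δ ts) →
      Provable cut (t.setSeq p Γ (insert A Δ)) →
      Provable cut (t.setSeq p Γ (insert (MBForm.boxc ⟨1, Pm.one_mem⟩ A) Δ))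


/-- The subformula relation. -/
inductive Subf {Pm : MBParams} : MBForm Pm → MBForm Pm → Prop
  | refl (A : MBForm Pm) : Subf A A
  | negS {A B : MBForm Pm} : Subf A B → Subf A (.neg B)
  | conjL {A B C : MBForm Pm} : Subf A B → Subf A (.conj B C)
  | conjR {A B C : MBForm Pm} : Subf A C → Subf A (.conj B C)
  | boxcS {A B : MBForm Pm} {α : Pm.J} : Subf A B → Subf A (.boxc α B)
  | boxoS {A B : MBForm Pm} {α : Pm.J} : Subf A B → Subf A (.boxo α B)

/-- `A` occurs in (some sequent of) the nested-sequent `t`. -/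
def OccursIn {Pm : MBParams} (A : MBForm Pm) (t : NSeq Pm) : Prop :=
  ∃ p Γ Δ ts, SubAt t p (.node Γ Δ ts) ∧ (A ∈ Γ ∨ A ∈ Δ)

/-- One step of the saturation procedure used to build `Γ_C ⇒ Δ_C, T_C`.
The state is a nested-sequent together with the set of (address, formula)
occurrences of right-hand boxed formulas that have already been processed by
step (8). -/
inductive SatStep {Pm : MBParams} :
    NSeq Pm × Set (List ℕ × MBForm Pm) → NSeq Pm × Set (List ℕ × MBForm Pm) → Prop
  /-- step (1): `A ∧ B` on the left -/
  | andL {t D p Γ Δ ts A B} :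
      SubAt t p (.node Γ Δ ts) → MBForm.conj A B ∈ Γ →
      SatStep (t, D) (t.setSeq p (insert A (insert B Γ)) Δ, D)
  /-- step (2): `A ∧ B` on the right; the disjunct keeping unprovability is adopted -/
  | andR {t D p Γ Δ ts A B C} :
      SubAt t p (.node Γ Δ ts) → MBForm.conj A B ∈ Δ → (C = A ∨ C = B) →
      ¬ Provable true (t.setSeq p Γ (insert C Δ)) →
      SatStep (t, D) (t.setSeq p Γ (insert C Δ), D)
  /-- step (3): `¬A` on the left -/
  | negL {t D p Γ Δ ts A} :
      SubAt t p (.node Γ Δ ts) → MBForm.neg A ∈ Γ →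
      SatStep (t, D) (t.setSeq p Γ (insert A Δ), D)
  /-- step (4): `¬A` on the right -/
  | negR {t D p Γ Δ ts A} :
      SubAt t p (.node Γ Δ ts) → MBForm.neg A ∈ Δ →
      SatStep (t, D) (t.setSeq p (insert A Γ) Δ, D)
  /-- step (5): `□^d_α A` on the left of the parent of a bracket with `(α,d) ⪯ (β,d')` -/
  | boxL {t D p Γ Δ ts i l u Γ' Δ' ts' A} {α : Pm.J} {d : Side} :
      SubAt t p (.node Γ Δ ts) → NSeqs.get ts i = some (l, u) →
      SubAt t (p ++ [i]) (.node Γ' Δ' ts') →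
      pleq (α : ℝ) d l.α l.d → mkBox d α A ∈ Γ →
      SatStep (t, D) (t.setSeq (p ++ [i]) (insert A Γ') Δ', D)
  /-- step (6): `□^d_α A` on the left of the child of a bracket with `(α,d) ⪯ (β,d')` -/
  | boxLsym {t D p Γ Δ ts i l u Γ' Δ' ts' A} {α : Pm.J} {d : Side} :
      SubAt t p (.node Γ Δ ts) → NSeqs.get ts i = some (l, u) →
      SubAt t (p ++ [i]) (.node Γ' Δ' ts') →
      pleq (α : ℝ) d l.α l.d → mkBox d α A ∈ Γ' →
      SatStep (t, D) (t.setSeq p (insert A Γ) Δ, D)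
  /-- step (7): `□^d_α A` on the left, `(α,d) ≠ (1,o)` -/
  | boxLself {t D p Γ Δ ts A} {α : Pm.J} {d : Side} :
      SubAt t p (.node Γ Δ ts) → ¬((α : ℝ) = 1 ∧ d = Side.o) → mkBox d α A ∈ Γ →
      SatStep (t, D) (t.setSeq p (insert A Γ) Δ, D)
  /-- step (8): `□^d_α A` on the right (`α ≠ 1`), performed once per occurrence -/
  | boxR {t D p Γ Δ ts A} {α : Pm.J} {d : Side} (hne : (α : ℝ) ≠ 1) :
      SubAt t p (.node Γ Δ ts) → mkBox d α A ∈ Δ → (p, mkBox d α A) ∉ D →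
      SatStep (t, D)
        (t.addChild p ⟨(α : ℝ), α.2, hne, d⟩ (.node ∅ {A} .nil),
         insert (p, mkBox d α A) D)
  /-- step (9): `□^c_1 A` on the right -/
  | boxRself {t D p Γ Δ ts A} :
      SubAt t p (.node Γ Δ ts) → MBForm.boxc ⟨1, Pm.one_mem⟩ A ∈ Δ →
      SatStep (t, D) (t.setSeq p Γ (insert A Δ), D)
  /-- step (10): `□^c_0 A` on the left of some node: add `A` to the left of any node -/
  | boxC0 {t D p Γ Δ ts q Γ'' Δ'' ts'' A} :
      SubAt t p (.node Γ Δ ts) → MBForm.boxc ⟨0, Pm.zero_mem⟩ A ∈ Γ →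
      SubAt t q (.node Γ'' Δ'' ts'') →
      SatStep (t, D) (t.setSeq q (insert A Γ'') Δ'', D)

/-- A state of the saturation procedure is saturated (terminal) when no
saturation step changes it any more. -/
def Saturated {Pm : MBParams} (s : NSeq Pm × Set (List ℕ × MBForm Pm)) : Prop :=
  ∀ s', SatStep s s' → s' = s


mutual
/-- The subtree of `t` at address `p`, as a function. -/
def NSeq.sub? {Pm : MBParams} : NSeq Pm → List ℕ → Option (NSeq Pm)
  | t, [] => some t
  | .node _ _ ts, i :: p => NSeqs.subs? ts i p
def NSeqs.subs? {Pm : MBParams} : NSeqs Pm → ℕ → List ℕ → Option (NSeq Pm)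
  | .nil, _, _ => none
  | .cons _ t _, 0, p => t.sub? p
  | .cons _ _ ts, n+1, p => NSeqs.subs? ts n p
end

/-- The label of the edge from the node at address `p` to its `i`-th child. -/
def labelAt {Pm : MBParams} (t : NSeq Pm) (p : List ℕ) (i : ℕ) : Option (MBLab Pm) :=
  match t.sub? p with
  | some (.node _ _ ts) => (NSeqs.get ts i).map Prod.fst
  | none => none

/-- The set of elements of `J` appearing in a formula. -/
def MBForm.jsetF {Pm : MBParams} : MBForm Pm → Set ℝ
  | .var _ => ∅
  | .top => ∅
  | .bot => ∅
  | .neg A => A.jsetF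
  | .conj A B => A.jsetF ∪ B.jsetF
  | .boxc α A => insert (α : ℝ) A.jsetF
  | .boxo α A => insert (α : ℝ) A.jsetF

mutual
/-- The numbers appearing in a nested-sequent (in formulas or brackets). -/
def NSeq.jsetT {Pm : MBParams} : NSeq Pm → Set ℝ
  | .node Γ Δ ts =>
      (⋃ A ∈ Γ, MBForm.jsetF A) ∪ (⋃ A ∈ Δ, MBForm.jsetF A) ∪ NSeqs.jsetTs ts
def NSeqs.jsetTs {Pm : MBParams} : NSeqs Pm → Set ℝ
  | .nil => ∅
  | .cons l t ts => insert l.α (t.jsetT ∪ NSeqs.jsetTs ts)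
end

/-- `(Γ ⇒ Δ, T)_J`: the numbers appearing in the nested-sequent, with `0` and `1`. -/
def jset {Pm : MBParams} (t : NSeq Pm) : Set ℝ :=
  insert (0:ℝ) (insert (1:ℝ) t.jsetT)

/-- `U` is an interpolated set of `Js`. -/
def Interpolated (Js U : Set ℝ) : Prop :=
  U.Finite ∧ U ⊆ Set.Icc (0:ℝ) 1 ∧ Js ⊆ U ∧
    ∀ α ∈ Js, ∀ β ∈ Js, α < β → (∀ γ ∈ Js, ¬ (α < γ ∧ γ < β)) →
      ∃! δ, δ ∈ U ∧ α < δ ∧ δ < β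

/-- `Suc U α`: the successor of `α` in the interpolated set `U` (with `Suc 1 = 1`). -/
noncomputable def Suc (U : Set ℝ) (α : ℝ) : ℝ := sInf ((U ∩ Set.Ioi α) ∪ {1})

/-- Auxiliary value of the canonical relation in case `q` is the child of `p`
via a bracket (`β` for `[·]^c_β`, `Suc β` for `[·]^o_β`), and `0` otherwise. -/
noncomputable def lval {Pm : MBParams} (t : NSeq Pm) (U : Set ℝ) (p q : List ℕ) : ℝ :=
  match q.getLast? with
  | none => 0
  | some i =>
      if q.dropLast = p then
        match labelAt t p i with
        | some l => (match l.d with | Side.c => l.α | Side.o => Suc U l.α)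
        | none => 0
      else 0

/-- The canonical relation `R_C` (on node addresses). -/
noncomputable def RC {Pm : MBParams} (t : NSeq Pm) (U : Set ℝ) (p q : List ℕ) : ℝ :=
  if p = q then 1 else max (lval t U p q) (lval t U q p)

/-- The worlds of the canonical model: the nodes of the saturated nested-sequent. -/
def World {Pm : MBParams} (t : NSeq Pm) : Type := {p : List ℕ // IsNode t p}

/-- The canonical relation `R_C`, as a function on the worlds. -/
noncomputable def RCW {Pm : MBParams} (t : NSeq Pm) (U : Set ℝ) (p q : World t) : ℝ :=
  RC t U p.val q.val

/-- The canonical valuation `V_C` of the propositional variables. -/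
def VC {Pm : MBParams} (t : NSeq Pm) (n : ℕ) : Set (World t) :=
  {p | ∃ Γ Δ ts, SubAt t p.val (.node Γ Δ ts) ∧ MBForm.var n ∈ Γ}

/-- `P_C`: the family of all definable sets of worlds of the canonical model. -/
def PC {Pm : MBParams} (t : NSeq Pm) (U : Set ℝ) : Set (Set (World t)) :=
  {X | ∃ A : MBForm Pm, X = MBForm.valR (RCW t U) (VC t) A}


section FMPProof

variable {Pm : MBParams}

/-- The list of subformulas of a formula. -/
def MBForm.subs : MBForm Pm → List (MBForm Pm)
  | .var n => [.var n]
  | .top => [.top]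
  | .bot => [.bot]
  | .neg B => .neg B :: B.subs
  | .conj B C => .conj B C :: (B.subs ++ C.subs)
  | .boxc α B => .boxc α B :: B.subs
  | .boxo α B => .boxo α B :: B.subs

lemma MBForm.mem_subs_self (B : MBForm Pm) : B ∈ B.subs := by
  cases B <;> simp [MBForm.subs]

lemma MBForm.mem_subs_trans : ∀ (A : MBForm Pm) {B C : MBForm Pm},
    C ∈ A.subs → B ∈ C.subs → B ∈ A.subs := by
  intro A
  induction A with
  | var n =>
      intro B C hC hB
      simp [MBForm.subs] at hC; subst hC; simpa [MBForm.subs] using hB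
  | top =>
      intro B C hC hB
      simp [MBForm.subs] at hC; subst hC; simpa [MBForm.subs] using hB
  | bot =>
      intro B C hC hB
      simp [MBForm.subs] at hC; subst hC; simpa [MBForm.subs] using hB
  | neg A1 ih =>
      intro B C hC hB
      simp only [MBForm.subs, List.mem_cons] at hC ⊢
      rcases hC with rfl | hC
      · simpa [MBForm.subs] using hB
      · exact Or.inr (ih hC hB)
  | conj A1 A2 ih1 ih2 =>
      intro B C hC hB
      simp only [MBForm.subs, List.mem_cons, List.mem_append] at hC ⊢
      rcases hC with rfl | hC | hC
      · simpa [MBForm.subs] using hB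
      · exact Or.inr (Or.inl (ih1 hC hB))
      · exact Or.inr (Or.inr (ih2 hC hB))
  | boxc α A1 ih =>
      intro B C hC hB
      simp only [MBForm.subs, List.mem_cons] at hC ⊢
      rcases hC with rfl | hC
      · simpa [MBForm.subs] using hB
      · exact Or.inr (ih hC hB)
  | boxo α A1 ih =>
      intro B C hC hB
      simp only [MBForm.subs, List.mem_cons] at hC ⊢
      rcases hC with rfl | hC
      · simpa [MBForm.subs] using hB
      · exact Or.inr (ih hC hB)

variable (A : MBForm Pm) (M : MBRealization Pm)

open Classical in
/-- The theory of a world on the subformulas of `A`. -/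
noncomputable def theta (s : M.F.S) : Finset (MBForm Pm) :=
  A.subs.toFinset.filter (fun B => s ∈ M.val B)

lemma theta_agree {s t : M.F.S} (h : theta A M s = theta A M t)
    {B : MBForm Pm} (hB : B ∈ A.subs) : s ∈ M.val B ↔ t ∈ M.val B := by
  have h1 : B ∈ theta A M s ↔ B ∈ theta A M t := by rw [h]
  simpa [theta, Finset.mem_filter, List.mem_toFinset, hB] using h1

/-- The worlds of the finite model: realized theories. -/
def Wld : Type := {F : Finset (MBForm Pm) // ∃ s, theta A M s = F}

noncomputable def fW (s : M.F.S) : Wld A M := ⟨theta A M s, s, rfl⟩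

/-- The set of distances between members of the two classes. -/
def pset (x y : Wld A M) : Set ℝ :=
  {r | ∃ s t, theta A M s = x.1 ∧ theta A M t = y.1 ∧ M.F.R s t = r}

lemma pset_nonempty (x y : Wld A M) : (pset A M x y).Nonempty := by
  obtain ⟨s, hs⟩ := x.2; obtain ⟨t, ht⟩ := y.2
  exact ⟨M.F.R s t, s, t, hs, ht, rfl⟩

lemma pset_subset (x y : Wld A M) : pset A M x y ⊆ Set.Icc (0:ℝ) 1 := by
  rintro r ⟨s, t, -, -, rfl⟩; exact M.F.mem_Icc s t

lemma pset_bdd (x y : Wld A M) : BddAbove (pset A M x y) :=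
  ⟨1, fun r hr => (pset_subset A M x y hr).2⟩

lemma pset_symm (x y : Wld A M) : pset A M x y = pset A M y x := by
  ext r
  constructor <;> rintro ⟨s, t, hs, ht, rfl⟩ <;>
    exact ⟨t, s, ht, hs, M.F.symm t s⟩

noncomputable def uu (x y : Wld A M) : ℝ := sSup (pset A M x y)
noncomputable def aa (x y : Wld A M) : ℝ := sSup (Pm.J ∩ Set.Iio (uu A M x y))

open Classical in
/-- The relation of the finite model. -/
noncomputable def RW (x y : Wld A M) : ℝ :=
  if x.1 = y.1 then 1
  else if uu A M x y ∈ pset A M x y then uu A M x y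
  else (aa A M x y + uu A M x y) / 2

lemma uu_symm (x y : Wld A M) : uu A M x y = uu A M y x := by
  unfold uu; rw [pset_symm]

lemma aa_symm (x y : Wld A M) : aa A M x y = aa A M y x := by
  unfold aa; rw [uu_symm]

lemma uu_le_one (x y : Wld A M) : uu A M x y ≤ 1 :=
  csSup_le (pset_nonempty A M x y) (fun r hr => (pset_subset A M x y hr).2)

lemma uu_pos (x y : Wld A M) (h : uu A M x y ∉ pset A M x y) : 0 < uu A M x y := by
  obtain ⟨r, hr⟩ := pset_nonempty A M x y
  by_contra hle
  push_neg at hle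
  have h1 : r ≤ uu A M x y := le_csSup (pset_bdd A M x y) hr
  have h2 : (0:ℝ) ≤ r := (pset_subset A M x y hr).1
  have h3 : r = uu A M x y := le_antisymm h1 (hle.trans h2)
  exact h (h3 ▸ hr)

lemma aa_mem (x y : Wld A M) (h : uu A M x y ∉ pset A M x y) :
    aa A M x y ∈ Pm.J ∧ aa A M x y < uu A M x y := by
  have hne : (Pm.J ∩ Set.Iio (uu A M x y)).Nonempty :=
    ⟨0, Pm.zero_mem, uu_pos A M x y h⟩
  have hfin : (Pm.J ∩ Set.Iio (uu A M x y)).Finite := Pm.finite.inter_of_left _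
  have hmem := hne.csSup_mem hfin
  exact ⟨hmem.1, hmem.2⟩

lemma le_aa (x y : Wld A M) {α : ℝ} (hα : α ∈ Pm.J) (hlt : α < uu A M x y) :
    α ≤ aa A M x y :=
  le_csSup ((Pm.finite.inter_of_left _).bddAbove) ⟨hα, hlt⟩

lemma lt_one_of_mem (x y : Wld A M) (hd : x.1 ≠ y.1) :
    ∀ r ∈ pset A M x y, r < 1 := by
  rintro r ⟨s, t, hs, ht, rfl⟩
  have hst : s ≠ t := by rintro rfl; exact hd (hs.symm.trans ht)
  exact lt_of_le_of_ne (M.F.mem_Icc s t).2 (fun hh => hst ((M.F.eq_one_iff s t).1 hh))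

lemma RW_symm (x y : Wld A M) : RW A M x y = RW A M y x := by
  unfold RW
  rw [uu_symm A M x y, aa_symm A M x y, pset_symm A M x y]
  by_cases h : x.1 = y.1
  · rw [if_pos h, if_pos h.symm]
  · rw [if_neg h, if_neg (Ne.symm h)]

lemma RW_lt_one (x y : Wld A M) (hd : x.1 ≠ y.1) : RW A M x y < 1 := by
  rw [RW, if_neg hd]
  split_ifs with h2
  · exact lt_one_of_mem A M x y hd _ h2
  · have h3 := aa_mem A M x y h2
    have h4 := uu_le_one A M x y
    linarith [h3.2]

lemma RW_mem_Icc (x y : Wld A M) : RW A M x y ∈ Set.Icc (0:ℝ) 1 := by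
  unfold RW
  split_ifs with h1 h2
  · exact ⟨zero_le_one, le_refl 1⟩
  · exact pset_subset A M x y h2
  · have h3 := aa_mem A M x y h2
    have h4 := uu_le_one A M x y
    have h5 : (0:ℝ) ≤ aa A M x y := (Pm.subI h3.1).1
    exact ⟨by linarith [h3.2], by linarith [h3.2]⟩

lemma RW_eq_one_iff (x y : Wld A M) : RW A M x y = 1 ↔ x = y := by
  constructor
  · intro h
    by_contra hne
    have hd : x.1 ≠ y.1 := fun hh => hne (Subtype.ext hh)
    exact absurd h (ne_of_lt (RW_lt_one A M x y hd))
  · rintro rfl; simp [RW]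

lemma le_RW_iff (x y : Wld A M) {α : ℝ} (hα : α ∈ Pm.J) :
    α ≤ RW A M x y ↔
      ∃ s t, theta A M s = x.1 ∧ theta A M t = y.1 ∧ α ≤ M.F.R s t := by
  by_cases hd : x.1 = y.1
  · rw [RW, if_pos hd]
    constructor
    · intro hle
      obtain ⟨s, hs⟩ := x.2
      refine ⟨s, s, hs, hs.trans hd, ?_⟩
      rw [(M.F.eq_one_iff s s).2 rfl]
      exact (Pm.subI hα).2
    · intro _
      exact (Pm.subI hα).2
  · rw [RW, if_neg hd]
    by_cases hat : uu A M x y ∈ pset A M x y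
    · rw [if_pos hat]
      constructor
      · intro hle
        obtain ⟨s, t, hs, ht, hr⟩ := hat
        exact ⟨s, t, hs, ht, hr ▸ hle⟩
      · rintro ⟨s, t, hs, ht, hle⟩
        exact hle.trans (le_csSup (pset_bdd A M x y) ⟨s, t, hs, ht, rfl⟩)
    · rw [if_neg hat]
      have h3 := aa_mem A M x y hat
      constructor
      · intro hle
        have hltu : α < uu A M x y := by linarith [h3.2]
        obtain ⟨r, hr, hαr⟩ := exists_lt_of_lt_csSup (pset_nonempty A M x y) hltu
        obtain ⟨s, t, hs, ht, hrr⟩ := hr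
        exact ⟨s, t, hs, ht, by rw [hrr]; exact hαr.le⟩
      · rintro ⟨s, t, hs, ht, hle⟩
        have hru : M.F.R s t ≤ uu A M x y :=
          le_csSup (pset_bdd A M x y) ⟨s, t, hs, ht, rfl⟩
        rcases lt_or_ge α (uu A M x y) with hcase | hcase
        · have := le_aa A M x y hα hcase
          linarith [h3.2]
        · exfalso
          have heq : M.F.R s t = uu A M x y := le_antisymm hru (hcase.trans hle)
          exact hat ⟨s, t, hs, ht, heq⟩

lemma lt_RW_iff (x y : Wld A M) {α : ℝ} (hα : α ∈ Pm.J) :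
    α < RW A M x y ↔
      ∃ s t, theta A M s = x.1 ∧ theta A M t = y.1 ∧ α < M.F.R s t := by
  by_cases hd : x.1 = y.1
  · rw [RW, if_pos hd]
    constructor
    · intro hlt
      obtain ⟨s, hs⟩ := x.2
      refine ⟨s, s, hs, hs.trans hd, ?_⟩
      rw [(M.F.eq_one_iff s s).2 rfl]
      exact hlt
    · rintro ⟨s, t, hs, ht, hlt⟩
      exact lt_of_lt_of_le hlt (M.F.mem_Icc s t).2
  · rw [RW, if_neg hd]
    by_cases hat : uu A M x y ∈ pset A M x y
    · rw [if_pos hat]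
      constructor
      · intro hlt
        obtain ⟨s, t, hs, ht, hr⟩ := hat
        exact ⟨s, t, hs, ht, hr ▸ hlt⟩
      · rintro ⟨s, t, hs, ht, hlt⟩
        exact lt_of_lt_of_le hlt (le_csSup (pset_bdd A M x y) ⟨s, t, hs, ht, rfl⟩)
    · rw [if_neg hat]
      have h3 := aa_mem A M x y hat
      constructor
      · intro hlt
        have hltu : α < uu A M x y := by linarith [h3.2]
        obtain ⟨r, hr, hαr⟩ := exists_lt_of_lt_csSup (pset_nonempty A M x y) hltu
        obtain ⟨s, t, hs, ht, hrr⟩ := hr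
        exact ⟨s, t, hs, ht, hrr ▸ hαr⟩
      · rintro ⟨s, t, hs, ht, hlt⟩
        have hru : M.F.R s t ≤ uu A M x y :=
          le_csSup (pset_bdd A M x y) ⟨s, t, hs, ht, rfl⟩
        have hltu : α < uu A M x y := lt_of_lt_of_le hlt hru
        have := le_aa A M x y hα hltu
        linarith [h3.2]

/-- The valuation of the finite model. -/
def VW (n : ℕ) : Set (Wld A M) := {x | ∀ s, theta A M s = x.1 → s ∈ M.V n}

/-- The filtration lemma. -/
lemma filt : ∀ B : MBForm Pm, B ∈ A.subs → ∀ s : M.F.S,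
    (fW A M s ∈ MBForm.valR (RW A M) (VW A M) B ↔
      s ∈ MBForm.valR M.F.R M.V B) := by
  intro B
  induction B with
  | var n =>
      intro hB s
      constructor
      · intro hmem
        exact hmem s rfl
      · intro hmem t ht
        exact (theta_agree A M ht hB).mpr hmem
  | top => intro _ s; simp [MBForm.valR]
  | bot => intro _ s; simp [MBForm.valR]
  | neg B ih =>
      intro hB s
      have hBs : B ∈ A.subs :=
        MBForm.mem_subs_trans A hB (List.mem_cons_of_mem _ (MBForm.mem_subs_self B))
      simp only [MBForm.valR, Set.mem_compl_iff]
      rw [ih hBs s]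
  | conj B C ihB ihC =>
      intro hB s
      have hBs : B ∈ A.subs :=
        MBForm.mem_subs_trans A hB
          (List.mem_cons_of_mem _ (List.mem_append_left _ (MBForm.mem_subs_self B)))
      have hCs : C ∈ A.subs :=
        MBForm.mem_subs_trans A hB
          (List.mem_cons_of_mem _ (List.mem_append_right _ (MBForm.mem_subs_self C)))
      simp only [MBForm.valR, Set.mem_inter_iff]
      rw [ihB hBs s, ihC hCs s]
  | boxc α B ih =>
      intro hB s
      have hBs : B ∈ A.subs :=
        MBForm.mem_subs_trans A hB (List.mem_cons_of_mem _ (MBForm.mem_subs_self B))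
      constructor
      · intro hmem t hRt
        have hle : (α:ℝ) ≤ RW A M (fW A M s) (fW A M t) :=
          (le_RW_iff A M _ _ α.2).mpr ⟨s, t, rfl, rfl, hRt⟩
        exact (ih hBs t).mp (hmem (fW A M t) hle)
      · intro hmem y hy
        obtain ⟨t0, ht0⟩ := y.2
        obtain ⟨s', t', hs', ht', hle⟩ := (le_RW_iff A M _ _ α.2).mp hy
        have hs'box : s' ∈ M.val (MBForm.boxc α B) :=
          (theta_agree A M hs' hB).mpr hmem
        have ht'B : t' ∈ M.val B := hs'box t' hle
        have ht0B : t0 ∈ M.val B :=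
          (theta_agree A M (ht'.trans ht0.symm) hBs).mp ht'B
        have hy0 : y = fW A M t0 := Subtype.ext ht0.symm
        rw [hy0]
        exact (ih hBs t0).mpr ht0B
  | boxo α B ih =>
      intro hB s
      have hBs : B ∈ A.subs :=
        MBForm.mem_subs_trans A hB (List.mem_cons_of_mem _ (MBForm.mem_subs_self B))
      constructor
      · intro hmem t hRt
        have hlt : (α:ℝ) < RW A M (fW A M s) (fW A M t) :=
          (lt_RW_iff A M _ _ α.2).mpr ⟨s, t, rfl, rfl, hRt⟩
        exact (ih hBs t).mp (hmem (fW A M t) hlt)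
      · intro hmem y hy
        obtain ⟨t0, ht0⟩ := y.2
        obtain ⟨s', t', hs', ht', hlt⟩ := (lt_RW_iff A M _ _ α.2).mp hy
        have hs'box : s' ∈ M.val (MBForm.boxo α B) :=
          (theta_agree A M hs' hB).mpr hmem
        have ht'B : t' ∈ M.val B := hs'box t' hlt
        have ht0B : t0 ∈ M.val B :=
          (theta_agree A M (ht'.trans ht0.symm) hBs).mp ht'B
        have hy0 : y = fW A M t0 := Subtype.ext ht0.symm
        rw [hy0]
        exact (ih hBs t0).mpr ht0B

lemma Wld_finite : Finite (Wld A M) := by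
  have hfin : {F : Finset (MBForm Pm) | ∃ s, theta A M s = F}.Finite := by
    apply Set.Finite.subset (A.subs.toFinset.powerset : Finset _).finite_toSet
    rintro F ⟨s, rfl⟩
    simp only [Finset.coe_powerset, Set.mem_preimage, Set.mem_powerset_iff,
      Finset.coe_subset]
    intro B hBmem
    have hB2 : B ∈ theta A M s := hBmem
    simp only [theta, Finset.mem_filter] at hB2
    exact hB2.1
  exact hfin.to_subtype

end FMPProof

/-- Finite model property for MB: if a formula `A` is not
valid, then there is an MB-realization with a finite set of worlds in which
`A` is not valid. -/
theorem finite_model_property_MB {Pm : MBParams} (A : MBForm Pm)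
    (h : ¬ MBValid A) :
    ∃ M : MBRealization Pm, Finite M.F.S ∧ ∃ s : M.F.S, s ∉ M.val A := by
  simp only [MBValid, not_forall] at h
  obtain ⟨M, s0, hs0⟩ := h
  refine ⟨{
    F := { S := Wld A M, nonempty := ⟨fW A M s0⟩, R := RW A M,
           mem_Icc := RW_mem_Icc A M, eq_one_iff := RW_eq_one_iff A M,
           symm := RW_symm A M },
    P := Set.univ,
    univ_mem := trivial, empty_mem := trivial,
    inter_mem := fun _ _ _ _ => trivial,
    compl_mem := fun _ _ => trivial,
    boxc_mem := fun _ _ _ _ => trivial,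
    boxo_mem := fun _ _ _ _ => trivial,
    V := VW A M, V_mem := fun _ => trivial }, Wld_finite A M, fW A M s0, ?_⟩
  intro hmem
  exact hs0 ((filt A M A (MBForm.mem_subs_self A) s0).mp hmem)

end MBQL
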